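/- Under the nonlinear outcome model Y = f(X; β̇) + g(U) + ε_y with X = ΛU + ε_x, where ε_x is independent of U, ε_y is independent of (X, U) with mean zero, and B satisfies BᵀΛ = 0 (columns spanning col(Λ)^⊥), the GMM moment condition holds at the truth: E[BᵀX · (Y − f(X; β̇))] = E[Bᵀε_x · g(U)] + E[Bᵀε_x]·E[ε_y] = 0, provided E[ε_x] = 0 and ε_x ⟂ U. Hence G(β̇) = ‖E[SIV(Y − f(X;β̇))]‖₂² = 0. -/

import Mathlib

open Matrix MeasureTheory ProbabilityTheory

/-!
Because `BᵀΛ = 0`, the instrument is `BᵀX = Bᵀεx` and the residual at the truth is `g(U) + εy`,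
so every moment is a combination of `E[εx_j g(U)]` and `E[εx_j εy]`. Both factor by independence,
and `E[εx_j] = 0` kills them.

Nothing makes `εx`, `εy` or `U` measurable, so the factorisation rests on the fact that
independent factors of an a.e. measurable product `FG = H` which is not a.e. zero are a.e.
measurable. For outer measures, `S` is null measurable once `μ S + μ Sᶜ ≤ 1`. If on an event
`{G ∈ t}` of positive probability `{F ∈ s}` agrees with a measurable set, independence gives
`μ(G ∈ t) (μ(F ∈ s) + μ(F ∉ s)) = μ(G ∈ t)`; this recovers `F` from `H / |G|` on `{G > 0}` or
`{G < 0}` as soon as `|G|` is a.e. measurable. For the nonnegative factors `|F|`, `|G|` one of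
them is a.e. measurable: if `G` gives mass at least `ε` to every window `(a₀/r, r a₀]`, the rays
`{F ≤ c}` are controlled by the windows of `H` around `a₀ c`, which shrink to a null level set
for all but countably many `c`; otherwise every window of `G` around a point `c` can be made
negligible, and localizing on a window of `F` of positive mass bounds the defect of the ray
`{G ≤ c}` by the mass of such a window.
-/

open Set Filter Topology
open scoped ENNReal

namespace MeasureTheory

variable {Ω : Type*} [MeasurableSpace Ω] {μ : Measure Ω}

lemma measure_inter_add_measure_inter_le (W M₁ : Set Ω) {M₂ : Set Ω} (hM₂ : MeasurableSet M₂) :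
    μ (W ∩ M₁) + μ (W ∩ M₂) ≤ μ W + μ (W ∩ M₁ ∩ M₂) := by
  calc μ (W ∩ M₁) + μ (W ∩ M₂)
      = μ (W ∩ M₁ ∩ M₂) + (μ ((W ∩ M₁) \ M₂) + μ (W ∩ M₂)) := by
        rw [← measure_inter_add_sdiff (W ∩ M₁) hM₂, add_assoc]
    _ ≤ μ (W ∩ M₁ ∩ M₂) + (μ (W \ M₂) + μ (W ∩ M₂)) := by
        gcongr; exact inter_subset_left
    _ = μ W + μ (W ∩ M₁ ∩ M₂) := by
        rw [add_comm (μ (W \ M₂)), measure_inter_add_sdiff W hM₂, add_comm]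

lemma nullMeasurableSet_of_measure_add_measure_compl_le [IsProbabilityMeasure μ] {S : Set Ω}
    (h : μ S + μ Sᶜ ≤ 1) : NullMeasurableSet S μ := by
  set T := toMeasurable μ Sᶜ
  have hT : MeasurableSet T := measurableSet_toMeasurable μ Sᶜ
  have hTS : Tᶜ ⊆ S := compl_subset_comm.mp (subset_toMeasurable μ Sᶜ)
  have hdiff : S \ T = Tᶜ := sdiff_eq_compl_inter.trans (inter_eq_left.mpr hTS)
  have hnull : μ (S ∩ T) = 0 := by
    have hsplit : μ (S ∩ T) + (μ Tᶜ + μ T) ≤ 0 + (μ Tᶜ + μ T) := by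
      calc μ (S ∩ T) + (μ Tᶜ + μ T) = μ S + μ Sᶜ := by
            rw [← add_assoc, ← hdiff, measure_inter_add_sdiff S hT, measure_toMeasurable]
        _ ≤ 1 := h
        _ = 0 + (μ Tᶜ + μ T) := by
            rw [zero_add, add_comm, measure_add_measure_compl hT, measure_univ]
    exact nonpos_iff_eq_zero.mp (ENNReal.le_of_add_le_add_right (by finiteness) hsplit)
  refine hT.compl.nullMeasurableSet.congr (ae_eq_set.mpr ⟨?_, ?_⟩)
  · rw [sdiff_eq_empty.mpr hTS, measure_empty]
  · rwa [sdiff_compl]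

lemma nullMeasurable_of_nullMeasurableSet_preimage_Iic {F : Ω → ℝ} {B : Set ℝ}
    (hB : B.Countable) (h : ∀ c ∉ B, NullMeasurableSet (F ⁻¹' Iic c) μ) :
    NullMeasurable F μ := by
  refine measurable_of_Iic (δ := NullMeasurableSpace Ω μ) (f := F) fun c => ?_
  change NullMeasurableSet (F ⁻¹' Iic c) μ
  have hdense : Dense Bᶜ := hB.dense_compl ℝ
  choose d hdB hd using fun n : ℕ =>
    hdense.exists_between (lt_add_of_pos_right c (Nat.one_div_pos_of_nat (n := n)))
  have hlim : Tendsto d atTop (𝓝 c) := by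
    refine tendsto_of_tendsto_of_tendsto_of_le_of_le tendsto_const_nhds ?_
      (fun n => (hd n).1.le) (fun n => (hd n).2.le)
    simpa using tendsto_const_nhds.add (tendsto_one_div_add_atTop_nhds_zero_nat (𝕜 := ℝ))
  have hIic : F ⁻¹' Iic c = ⋂ n, F ⁻¹' Iic (d n) := by
    ext ω
    simp only [mem_preimage, mem_Iic, mem_iInter]
    exact ⟨fun hω n => hω.trans (hd n).1.le, fun hω => ge_of_tendsto' hlim hω⟩
  rw [hIic]
  exact NullMeasurableSet.iInter fun n => h (d n) (hdB n)

end MeasureTheory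

namespace ProbabilityTheory

section General

variable {Ω β γ : Type*} [MeasurableSpace Ω] {μ : Measure Ω}
  [MeasurableSpace β] [MeasurableSpace γ] {F : Ω → β} {G : Ω → γ}

lemma IndepFun.measure_mul_measure_add_measure_compl_le (hind : IndepFun F G μ)
    {s : Set β} {t : Set γ} (hs : MeasurableSet s) (ht : MeasurableSet t)
    {M₁ M₂ : Set Ω} (hM₂ : MeasurableSet M₂)
    (h₁ : ∀ᵐ ω ∂μ, G ω ∈ t → F ω ∈ s → ω ∈ M₁) (h₂ : ∀ᵐ ω ∂μ, G ω ∈ t → F ω ∉ s → ω ∈ M₂) :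
    μ (G ⁻¹' t) * (μ (F ⁻¹' s) + μ (F ⁻¹' s)ᶜ)
      ≤ μ (G ⁻¹' t) + μ (G ⁻¹' t ∩ M₁ ∩ M₂) := by
  have hmul : ∀ s' : Set β, MeasurableSet s' →
      μ (G ⁻¹' t) * μ (F ⁻¹' s') = μ (G ⁻¹' t ∩ F ⁻¹' s') := fun s' hs' => by
    rw [mul_comm, inter_comm, hind.measure_inter_preimage_eq_mul _ _ hs' ht]
  rw [mul_add, ← preimage_compl, hmul s hs, hmul sᶜ hs.compl]
  refine le_trans (add_le_add (measure_mono_ae ?_) (measure_mono_ae ?_))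
    (measure_inter_add_measure_inter_le _ M₁ hM₂)
  · filter_upwards [h₁] with ω hω using fun hmem => ⟨hmem.1, hω hmem.1 hmem.2⟩
  · filter_upwards [h₂] with ω hω using fun hmem => ⟨hmem.1, hω hmem.1 hmem.2⟩

lemma IndepFun.nullMeasurableSet_preimage_of_ae_mem_iff [IsProbabilityMeasure μ]
    (hind : IndepFun F G μ)
    {s : Set β} {t : Set γ} (hs : MeasurableSet s) (ht : MeasurableSet t)
    (hpos : μ (G ⁻¹' t) ≠ 0) {M : Set Ω} (hM : MeasurableSet M)
    (h : ∀ᵐ ω ∂μ, G ω ∈ t → (F ω ∈ s ↔ ω ∈ M)) :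
    NullMeasurableSet (F ⁻¹' s) μ := by
  refine nullMeasurableSet_of_measure_add_measure_compl_le ?_
  have key := hind.measure_mul_measure_add_measure_compl_le hs ht hM.compl
    (M₁ := M) (by filter_upwards [h] with ω hω hG hF using (hω hG).mp hF)
    (by filter_upwards [h] with ω hω hG hF using fun hM' => hF ((hω hG).mpr hM'))
  rw [inter_assoc, inter_compl_self, inter_empty, measure_empty, add_zero,
    ← mul_one (μ (G ⁻¹' t)), mul_assoc, one_mul] at key
  exact (ENNReal.mul_le_mul_iff_right hpos (measure_ne_top μ _)).mp key

lemma IndepFun.aemeasurable_of_ae_eq_on [IsProbabilityMeasure μ]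
    [MeasurableSpace.CountablyGenerated β]
    (hind : IndepFun F G μ) {t : Set γ} (ht : MeasurableSet t) (hpos : μ (G ⁻¹' t) ≠ 0)
    {φ : Ω → β} (hφ : Measurable φ) (h : ∀ᵐ ω ∂μ, G ω ∈ t → F ω = φ ω) :
    AEMeasurable F μ :=
  NullMeasurable.aemeasurable fun s hs =>
    hind.nullMeasurableSet_preimage_of_ae_mem_iff hs ht hpos (hφ hs)
      (by filter_upwards [h] with ω hω hG using by rw [mem_preimage, hω hG])

end General

section Real

variable {Ω : Type*} [MeasurableSpace Ω] {μ : Measure Ω} {F G H : Ω → ℝ}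

lemma measure_preimage_compl_zero_ne_zero_of_mul_ae_eq (hae : F * G =ᵐ[μ] H)
    (hne : ¬ H =ᵐ[μ] 0) : μ (G ⁻¹' {0}ᶜ) ≠ 0 := by
  intro h0
  have hG : G =ᵐ[μ] 0 := ae_iff.mpr h0
  exact hne (hae.symm.trans (by filter_upwards [hG] with ω hω using by simp [hω]))

lemma exists_measure_preimage_Ioc_ne_zero (hG : 0 ≤ G) (hpos : μ (G ⁻¹' {0}ᶜ) ≠ 0)
    {r : ℝ} (hr : 1 < r) : ∃ a > 0, μ (G ⁻¹' Ioc a (r * a)) ≠ 0 := by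
  by_contra! hnull
  refine hpos (measure_mono_null (t := ⋃ n : ℤ, G ⁻¹' Ioc (r ^ n) (r * r ^ n)) ?_
    (measure_iUnion_null fun n => hnull _ (zpow_pos (by linarith) n)))
  intro ω hω
  obtain ⟨n, hn⟩ := exists_mem_Ioc_zpow ((hG ω).lt_of_ne' hω) hr
  exact mem_iUnion.mpr ⟨n, by rwa [mem_preimage, ← zpow_one_add₀ (by positivity), add_comm]⟩

lemma exists_measure_preimage_Ioc_lt [IsFiniteMeasure μ] (hH : Measurable H) {x : ℝ} (hx : 0 < x)
    (h0 : μ (H ⁻¹' {x}) = 0) {δ : ℝ≥0∞} (hδ : δ ≠ 0) :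
    ∃ r > 1, μ (H ⁻¹' Ioc (x / r) (r * x)) < δ := by
  have hmono : ∀ r r' : ℝ, 1 < r → r ≤ r' →
      H ⁻¹' Ioc (x / r) (r * x) ⊆ H ⁻¹' Ioc (x / r') (r' * x) := fun r r' hr hrr' =>
    preimage_mono (Ioc_subset_Ioc (div_le_div_of_nonneg_left hx.le (by linarith) hrr')
      (by gcongr))
  have hinter : ⋂ r > (1 : ℝ), H ⁻¹' Ioc (x / r) (r * x) ⊆ H ⁻¹' {x} := by
    intro ω hω
    simp only [mem_iInter, mem_preimage, mem_Ioc] at hω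
    refine le_antisymm (le_of_forall_gt_imp_ge_of_dense fun z hz => ?_)
      (le_of_forall_lt_imp_le_of_dense fun z hz => ?_)
    · simpa [div_mul_cancel₀ z hx.ne'] using (hω (z / x) ((one_lt_div hx).mpr hz)).2
    · rcases le_or_gt z 0 with hz0 | hz0
      · exact hz0.trans (div_pos hx two_pos |>.trans (hω 2 one_lt_two).1).le
      · simpa [div_div_cancel₀ hx.ne'] using (hω (x / z) ((one_lt_div hz0).mpr hz)).1.le
  have hlim := tendsto_measure_biInter_gt (μ := μ) (a := (1 : ℝ))
    (fun r _ => (hH measurableSet_Ioc).nullMeasurableSet) hmono ⟨2, one_lt_two, measure_ne_top _ _⟩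
  rw [measure_mono_null hinter h0] at hlim
  exact (eventually_mem_nhdsWithin.and
    ((tendsto_order.1 hlim).2 δ (pos_iff_ne_zero.mpr hδ))).exists

lemma nullMeasurableSet_preimage_Iic_of_forall_le_add [IsProbabilityMeasure μ] {c : ℝ}
    (h : ∀ δ : ℝ≥0∞, δ ≠ 0 → μ (F ⁻¹' Iic c) + μ (F ⁻¹' Ioi c) ≤ 1 + δ) :
    NullMeasurableSet (F ⁻¹' Iic c) μ := by
  refine nullMeasurableSet_of_measure_add_measure_compl_le
    (ENNReal.le_of_forall_pos_le_add fun δ hδ _ => ?_)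
  rw [← preimage_compl, compl_Iic]
  exact h δ (by exact_mod_cast hδ.ne')

lemma IndepFun.measure_preimage_Iic_add_Ioi_le [IsProbabilityMeasure μ] (hind : IndepFun F G μ)
    (hH : Measurable H) (hae : F * G =ᵐ[μ] H) {a b c : ℝ} (ha : 0 < a) (hc : 0 ≤ c)
    (hW : μ (G ⁻¹' Ioc a b) ≠ 0) :
    μ (F ⁻¹' Iic c) + μ (F ⁻¹' Ioi c)
      ≤ 1 + μ (G ⁻¹' Ioc a b ∩ H ⁻¹' Ioc (a * c) (b * c)) / μ (G ⁻¹' Ioc a b) := by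
  have key := hind.measure_mul_measure_add_measure_compl_le (s := Iic c) (t := Ioc a b)
    measurableSet_Iic measurableSet_Ioc (M₁ := H ⁻¹' Iic (b * c)) (M₂ := H ⁻¹' Ioi (a * c))
    (hH measurableSet_Ioi)
    (by filter_upwards [hae] with ω hω hG hF
        simp only [mem_preimage, mem_Iic, mem_Ioc, ← hω, Pi.mul_apply] at hG hF ⊢
        nlinarith)
    (by filter_upwards [hae] with ω hω hG hF
        simp only [mem_preimage, mem_Iic, mem_Ioi, mem_Ioc, not_le, ← hω, Pi.mul_apply] at hG hF ⊢
        nlinarith)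
  rw [inter_assoc, ← preimage_inter, Iic_inter_Ioi, ← preimage_compl, compl_Iic] at key
  refine (ENNReal.mul_le_mul_iff_right hW (measure_ne_top μ _)).mp ?_
  rwa [mul_add (μ _) 1, mul_one, ENNReal.mul_div_cancel hW (measure_ne_top μ _)]

lemma IndepFun.measure_preimage_Iic_add_Ioi_le_one_add [IsProbabilityMeasure μ]
    (hind : IndepFun F G μ) (hH : Measurable H) (hae : F * G =ᵐ[μ] H) {a c r : ℝ}
    (ha : 0 < a) (hc : 0 < c) (hr : 0 < r) (hW : μ (G ⁻¹' Ioc a (r * a)) ≠ 0) :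
    μ (F ⁻¹' Iic c) + μ (F ⁻¹' Ioi c) ≤ 1 + μ (F ⁻¹' Ioc (c / r) (r * c)) := by
  refine (hind.measure_preimage_Iic_add_Ioi_le hH hae ha hc.le hW).trans (add_le_add le_rfl ?_)
  rw [ENNReal.div_le_iff hW (measure_ne_top μ _),
    ← hind.measure_inter_preimage_eq_mul _ _ measurableSet_Ioc measurableSet_Ioc, inter_comm]
  refine measure_mono_ae ?_
  filter_upwards [hae] with ω hω ⟨⟨hHlo, hHhi⟩, hGlo, hGhi⟩
  rw [← hω, Pi.mul_apply] at hHlo hHhi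
  refine ⟨⟨?_, ?_⟩, hGlo, hGhi⟩
  · change c / r < F ω
    rw [div_lt_iff₀ hr]; nlinarith
  · change F ω ≤ r * c
    by_contra! h
    nlinarith [mul_pos (sub_pos.2 h) (ha.trans hGlo), mul_pos (mul_pos hr hc) (sub_pos.2 hGlo)]

/-- The exceptional rays `{F ≤ c}` are those for which `H` has an atom at `a₀ * c`. -/
lemma IndepFun.aemeasurable_of_forall_le_measure_window [IsProbabilityMeasure μ]
    (hind : IndepFun F G μ) (hF : 0 ≤ F) (hH : Measurable H) (hae : F * G =ᵐ[μ] H)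
    {a₀ : ℝ} (ha₀ : 0 < a₀) {ε : ℝ≥0∞} (hε : ε ≠ 0)
    (hwin : ∀ r > 1, ε ≤ μ (G ⁻¹' Ioc (a₀ / r) (r * a₀))) :
    AEMeasurable F μ := by
  have hB : (insert 0 ((· / a₀) '' {y | 0 < μ {ω | H ω = y}})).Countable :=
    ((Measure.countable_meas_level_set_pos hH).image _).insert 0
  refine (nullMeasurable_of_nullMeasurableSet_preimage_Iic hB fun c hc => ?_).aemeasurable
  have hc0 : c ≠ 0 := fun h => hc (h ▸ mem_insert c _)
  rcases hc0.lt_or_gt with hneg | hpos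
  · convert nullMeasurableSet_empty
    exact eq_empty_of_forall_notMem fun ω hω => (hF ω).not_gt (lt_of_le_of_lt hω hneg)
  have hatom : μ (H ⁻¹' {a₀ * c}) = 0 := by
    by_contra h
    exact hc (mem_insert_of_mem _ ⟨a₀ * c, pos_iff_ne_zero.mpr h, by field_simp⟩)
  refine nullMeasurableSet_preimage_Iic_of_forall_le_add fun δ hδ => ?_
  obtain ⟨r, hr, hsmall⟩ := exists_measure_preimage_Ioc_lt hH (mul_pos ha₀ hpos) hatom
    (mul_ne_zero hδ hε)
  have hW := hwin r hr
  calc μ (F ⁻¹' Iic c) + μ (F ⁻¹' Ioi c)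
      ≤ 1 + μ (G ⁻¹' Ioc (a₀ / r) (r * a₀) ∩ H ⁻¹' Ioc (a₀ / r * c) (r * a₀ * c))
          / μ (G ⁻¹' Ioc (a₀ / r) (r * a₀)) :=
        hind.measure_preimage_Iic_add_Ioi_le hH hae (by positivity) hpos.le
          (hε.bot_lt.trans_le hW).ne'
    _ ≤ 1 + μ (H ⁻¹' Ioc (a₀ * c / r) (r * (a₀ * c))) / ε := by
        rw [div_mul_eq_mul_div, mul_assoc]
        gcongr
        exact inter_subset_right
    _ ≤ 1 + δ := by gcongr; exact (ENNReal.div_lt_of_lt_mul hsmall).le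

lemma IndepFun.aemeasurable_of_forall_exists_measure_window_lt [IsProbabilityMeasure μ]
    (hind : IndepFun F G μ) (hF : 0 ≤ F) (hG : 0 ≤ G) (hGpos : μ (G ⁻¹' {0}ᶜ) ≠ 0)
    (hH : Measurable H) (hae : F * G =ᵐ[μ] H)
    (hwin : ∀ c > 0, ∀ δ ≠ 0, ∃ r > 1, μ (F ⁻¹' Ioc (c / r) (r * c)) < δ) :
    AEMeasurable F μ := by
  refine (nullMeasurable_of_nullMeasurableSet_preimage_Iic (countable_singleton 0)
    fun c hc => ?_).aemeasurable
  rcases (show c ≠ 0 from hc).lt_or_gt with hneg | hpos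
  · convert nullMeasurableSet_empty
    exact eq_empty_of_forall_notMem fun ω hω => (hF ω).not_gt (lt_of_le_of_lt hω hneg)
  refine nullMeasurableSet_preimage_Iic_of_forall_le_add fun δ hδ => ?_
  obtain ⟨r, hr, hsmall⟩ := hwin c hpos δ hδ
  obtain ⟨a, ha, hW⟩ := exists_measure_preimage_Ioc_ne_zero hG hGpos hr
  exact (hind.measure_preimage_Iic_add_Ioi_le_one_add hH hae ha hpos (by linarith) hW).trans
    (by gcongr)

lemma IndepFun.aemeasurable_or_aemeasurable_of_nonneg [IsProbabilityMeasure μ]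
    (hind : IndepFun F G μ) (hF : 0 ≤ F) (hG : 0 ≤ G) (hH : Measurable H)
    (hae : F * G =ᵐ[μ] H) (hne : ¬ H =ᵐ[μ] 0) :
    AEMeasurable F μ ∨ AEMeasurable G μ := by
  by_cases hatom : ∃ a₀ > 0, ∃ ε ≠ 0, ∀ r > 1, ε ≤ μ (G ⁻¹' Ioc (a₀ / r) (r * a₀))
  · obtain ⟨a₀, ha₀, ε, hε, hwin⟩ := hatom
    exact .inl (hind.aemeasurable_of_forall_le_measure_window hF hH hae ha₀ hε hwin)
  · push Not at hatom
    have hae' : G * F =ᵐ[μ] H := by rwa [mul_comm]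
    exact .inr (hind.symm.aemeasurable_of_forall_exists_measure_window_lt hG hF
      (measure_preimage_compl_zero_ne_zero_of_mul_ae_eq hae' hne) hH hae' hatom)

/-- On `{G > 0}` one has `F = H / |G|`, on `{G < 0}` one has `F = -H / |G|`, and one of these
two events has positive probability. -/
lemma IndepFun.aemeasurable_of_aemeasurable_abs [IsProbabilityMeasure μ]
    (hind : IndepFun F G μ) (hH : Measurable H) (hae : F * G =ᵐ[μ] H) (hne : ¬ H =ᵐ[μ] 0)
    (hG : AEMeasurable (fun ω => |G ω|) μ) : AEMeasurable F μ := by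
  have hsplit : μ (G ⁻¹' Ioi 0) ≠ 0 ∨ μ (G ⁻¹' Iio 0) ≠ 0 := by
    by_contra! h
    refine measure_preimage_compl_zero_ne_zero_of_mul_ae_eq hae hne ?_
    rw [← Iio_union_Ioi, preimage_union, measure_union_null_iff]
    exact ⟨h.2, h.1⟩
  rcases hsplit with hpos | hneg
  · refine hind.aemeasurable_of_ae_eq_on measurableSet_Ioi hpos (φ := fun ω => H ω / hG.mk _ ω)
      (hH.div hG.measurable_mk) ?_
    filter_upwards [hae, hG.ae_eq_mk] with ω hω hGω hGpos
    rw [← hω, ← hGω, Pi.mul_apply, abs_of_pos hGpos, mul_div_cancel_right₀ _ hGpos.ne']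
  · refine hind.aemeasurable_of_ae_eq_on measurableSet_Iio hneg (φ := fun ω => -H ω / hG.mk _ ω)
      (hH.neg.div hG.measurable_mk) ?_
    filter_upwards [hae, hG.ae_eq_mk] with ω hω hGω hGneg
    rw [← hω, ← hGω, Pi.mul_apply, abs_of_neg hGneg, neg_div_neg_eq,
      mul_div_cancel_right₀ _ hGneg.ne]

theorem IndepFun.aemeasurable_of_mul [IsProbabilityMeasure μ] (hind : IndepFun F G μ)
    (hFG : AEMeasurable (F * G) μ) (hne : ¬ F * G =ᵐ[μ] 0) :
    AEMeasurable F μ ∧ AEMeasurable G μ := by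
  set H := hFG.mk _
  have hH : Measurable H := hFG.measurable_mk
  have hae : F * G =ᵐ[μ] H := hFG.ae_eq_mk
  have hneH : ¬ H =ᵐ[μ] 0 := fun h => hne (hae.trans h)
  have hae' : G * F =ᵐ[μ] H := by rwa [mul_comm]
  have habs : (fun ω => |F ω|) * (fun ω => |G ω|) =ᵐ[μ] fun ω => |H ω| := by
    filter_upwards [hae] with ω hω using by simp [← hω, abs_mul]
  have hneabs : ¬ (fun ω => |H ω|) =ᵐ[μ] 0 := fun h =>
    hneH (by filter_upwards [h] with ω hω using abs_eq_zero.mp hω)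
  rcases (hind.comp measurable_abs measurable_abs).aemeasurable_or_aemeasurable_of_nonneg
    (fun ω => abs_nonneg _) (fun ω => abs_nonneg _) hH.abs habs hneabs with hF | hG
  · have hG := hind.symm.aemeasurable_of_aemeasurable_abs hH hae' hneH hF
    exact ⟨hind.aemeasurable_of_aemeasurable_abs hH hae hneH hG.abs, hG⟩
  · have hF := hind.aemeasurable_of_aemeasurable_abs hH hae hneH hG
    exact ⟨hF, hind.symm.aemeasurable_of_aemeasurable_abs hH hae' hneH hF.abs⟩

theorem IndepFun.integral_mul_eq_zero [IsProbabilityMeasure μ] (hind : IndepFun F G μ)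
    (hFG : Integrable (fun ω => F ω * G ω) μ) (hF : ∫ ω, F ω ∂μ = 0) :
    ∫ ω, F ω * G ω ∂μ = 0 := by
  by_cases hne : (F * G) =ᵐ[μ] 0
  · exact integral_eq_zero_of_ae hne
  obtain ⟨hFm, hGm⟩ := hind.aemeasurable_of_mul hFG.aemeasurable hne
  rw [hind.integral_fun_mul_eq_mul_integral hFm.aestronglyMeasurable hGm.aestronglyMeasurable,
    hF, zero_mul]

end Real

end ProbabilityTheory

lemma Matrix.mulVec_mulVec_add_of_mul_eq_zero {m n k : Type*} [Fintype n] [Fintype k]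
    {A : Matrix m n ℝ} {Λ : Matrix n k ℝ} (h : A * Λ = 0) (u : k → ℝ) (e : n → ℝ) :
    A *ᵥ (Λ *ᵥ u + e) = A *ᵥ e := by
  rw [mulVec_add, mulVec_mulVec, h, zero_mulVec, zero_add]

namespace MeasureTheory

lemma integral_mulVec_apply_mul_eq_zero {Ω m n : Type*} [MeasurableSpace Ω] {μ : Measure Ω}
    [Fintype n] (A : Matrix m n ℝ) {e : Ω → n → ℝ} {r : Ω → ℝ}
    (hint : ∀ j, Integrable (fun ω => e ω j * r ω) μ) (hzero : ∀ j, ∫ ω, e ω j * r ω ∂μ = 0)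
    (i : m) : ∫ ω, (A *ᵥ e ω) i * r ω ∂μ = 0 := by
  simp_rw [mulVec, dotProduct, Finset.sum_mul, mul_assoc]
  rw [integral_finsetSum _ fun j _ => (hint j).const_mul (A i j)]
  exact Finset.sum_eq_zero fun j _ => by rw [integral_const_mul, hzero j, mul_zero]

end MeasureTheory

theorem nonlinear_gmm_moment_condition_general {p q : ℕ}
    {Ω : Type*} [MeasurableSpace Ω] (μ : Measure Ω) [IsProbabilityMeasure μ]
    (Λ : Matrix (Fin p) (Fin q) ℝ)
    (B : Matrix (Fin p) (Fin (p - q)) ℝ) (hBΛ : Bᵀ * Λ = 0)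
    (X εx : Ω → Fin p → ℝ) (U : Ω → Fin q → ℝ) (Y εy : Ω → ℝ)
    (f : (Fin p → ℝ) → (Fin p → ℝ) → ℝ)
    (βdot : Fin p → ℝ) (g : (Fin q → ℝ) → ℝ) (hg : Measurable g)
    (hX : ∀ ω, X ω = Λ.mulVec (U ω) + εx ω)
    (hY : ∀ ω, Y ω = f (X ω) βdot + g (U ω) + εy ω)
    (hIndep : IndepFun εx U μ)
    (hIndep2 : IndepFun εy (fun ω => (X ω, U ω)) μ)
    (hEεx : ∀ i, ∫ ω, εx ω i ∂μ = 0)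
    (hInt1 : ∀ i, Integrable (fun ω => εx ω i * g (U ω)) μ)
    (hInt2 : ∀ i, Integrable (fun ω => εx ω i * εy ω) μ) :
    (∀ i, ∫ ω, Bᵀ.mulVec (X ω) i * (Y ω - f (X ω) βdot) ∂μ = 0) ∧
    (∑ i : Fin (p - q),
      (∫ ω, Bᵀ.mulVec (X ω) i * (Y ω - f (X ω) βdot) ∂μ)^2) = 0 := by
  have hεx_gU : ∀ j, IndepFun (fun ω => εx ω j) (fun ω => g (U ω)) μ := fun j =>
    hIndep.comp (measurable_pi_apply j) hg
  have hεx_εy : ∀ j, IndepFun (fun ω => εx ω j) εy μ := fun j => by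
    have hεx : (fun ω => εx ω j) = (fun w => (w.1 - Λ *ᵥ w.2) j) ∘ fun ω => (X ω, U ω) := by
      ext ω; simp [hX ω]
    rw [hεx]
    exact (hIndep2.comp measurable_id (by fun_prop)).symm
  have hint : ∀ j, Integrable (fun ω => εx ω j * (g (U ω) + εy ω)) μ := fun j => by
    simp_rw [mul_add]
    exact (hInt1 j).add (hInt2 j)
  have hzero : ∀ j, ∫ ω, εx ω j * (g (U ω) + εy ω) ∂μ = 0 := fun j => by
    simp_rw [mul_add]
    rw [integral_add (hInt1 j) (hInt2 j), (hεx_gU j).integral_mul_eq_zero (hInt1 j) (hEεx j),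
      (hεx_εy j).integral_mul_eq_zero (hInt2 j) (hEεx j), add_zero]
  have hSIV : ∀ ω, Bᵀ *ᵥ X ω = Bᵀ *ᵥ εx ω := fun ω => by
    rw [hX ω, Matrix.mulVec_mulVec_add_of_mul_eq_zero hBΛ]
  have hresidual : ∀ ω, Y ω - f (X ω) βdot = g (U ω) + εy ω := fun ω => by
    rw [hY ω]; ring
  have hmoment : ∀ i, ∫ ω, Bᵀ.mulVec (X ω) i * (Y ω - f (X ω) βdot) ∂μ = 0 := fun i => by
    simp_rw [hSIV, hresidual]
    exact integral_mulVec_apply_mul_eq_zero Bᵀ hint hzero i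
  exact ⟨hmoment, by simp [hmoment]⟩

/-- under the nonlinear outcome model `Y = f(X; β̇) + g(U) + εy`
with `X = ΛU + εx`, `εx ⟂ U`, `εy ⟂ (X, U)` with mean zero, `E εx = 0`,
`E g(U) = 0`, and `BᵀΛ = 0`, the GMM moment condition holds at the truth:
`E[BᵀX · (Y - f(X; β̇))] = 0`, hence `G(β̇) = ‖E[SIV (Y - f(X;β̇))]‖₂² = 0`. -/
theorem nonlinear_gmm_moment_condition {p q : ℕ}
    {Ω : Type*} [MeasurableSpace Ω] (μ : Measure Ω) [IsProbabilityMeasure μ]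
    (Λ : Matrix (Fin p) (Fin q) ℝ)
    (B : Matrix (Fin p) (Fin (p - q)) ℝ) (hBΛ : Bᵀ * Λ = 0)
    (X εx : Ω → Fin p → ℝ) (U : Ω → Fin q → ℝ) (Y εy : Ω → ℝ)
    (f : (Fin p → ℝ) → (Fin p → ℝ) → ℝ) (hf : Measurable fun x => f x)
    (βdot : Fin p → ℝ) (g : (Fin q → ℝ) → ℝ) (hg : Measurable g)
    (hX : ∀ ω, X ω = Λ.mulVec (U ω) + εx ω)
    (hY : ∀ ω, Y ω = f (X ω) βdot + g (U ω) + εy ω)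
    (hIndep : IndepFun εx U μ)
    (hIndep2 : IndepFun εy (fun ω => (X ω, U ω)) μ)
    (hEεx : ∀ i, ∫ ω, εx ω i ∂μ = 0)
    (hEεy : ∫ ω, εy ω ∂μ = 0)
    (hEg : ∫ ω, g (U ω) ∂μ = 0)
    (hInt1 : ∀ i, Integrable (fun ω => εx ω i * g (U ω)) μ)
    (hInt2 : ∀ i, Integrable (fun ω => εx ω i * εy ω) μ)
    (hInt3 : ∀ i, Integrable (fun ω => Bᵀ.mulVec (X ω) i * (Y ω - f (X ω) βdot)) μ) :
    (∀ i, ∫ ω, Bᵀ.mulVec (X ω) i * (Y ω - f (X ω) βdot) ∂μ = 0) ∧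
    (∑ i : Fin (p - q),
      (∫ ω, Bᵀ.mulVec (X ω) i * (Y ω - f (X ω) βdot) ∂μ)^2) = 0 :=
  nonlinear_gmm_moment_condition_general μ Λ B hBΛ X εx U Y εy f βdot g hg hX hY hIndep hIndep2 hEεx
    hInt1 hInt2
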